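/- Let A be an algebra over a field k and G a finite group acting on A by k-algebra automorphisms, with char k not dividing |G|. Let M be an A-A-bimodule equipped with a G-equivariant structure, i.e. A-A-bimodule isomorphisms α_g : M → M^g for all g ∈ G satisfying α_{hg} = (α_h)^g ∘ α_g (where (α_h)^g denotes the same underlying linear map viewed as a map M^g → (M^h)^g = M^{hg}). Define E : ⊕_{g∈G} M^g → ⊕_{g∈G} M^g by (E((m_t)_{t∈G}))_s := (1/|G|) Σ_{t∈G} (α_{st⁻¹})^t(m_t), and define ᾱ : M → ⊕_{g∈G} M^g by m ↦ (α_g(m))_{g∈G}. Then E is an idempotent endomorphism of the A-A-bimodule ⊕_{g∈G} M^g, ᾱ is an injective homomorphism of A-A-bimodules, the image of ᾱ is contained in the image of E, and ᾱ induces an isomorphism of A-A-bimodules from M onto E(⊕_{g∈G} M^g). -/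

import Mathlib

/-!
Write `ι m = (α_g m)_g` and `π f = |G|⁻¹ Σ_t α_t⁻¹ (f t)`. The cocycle condition gives
`α_{st⁻¹} = α_s ∘ α_t⁻¹`, so the averaging operator factors as `E = ι ∘ π`, while `π ∘ ι = id`
because `|G|` is invertible in `k`. Hence `E` is idempotent with the same image as `ι`, and `ι`
is injective. Compatibility with the twisted actions holds termwise, since
`α_{st⁻¹}` carries the `t`-twisted action to the `s`-twisted one.
-/

open TensorProduct

section

variable (k A : Type*) [Field k] [Ring A] [Algebra k A]

section EquivariantAverage

variable {k}
variable {G M : Type*} [AddCommGroup M] [Module k M]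

theorem apply_mul_inv_of_cocycle [Group G] {α : G → M ≃ₗ[k] M}
    (hcoc : ∀ (h g : G) (m : M), α (h * g) m = α h (α g m))
    (s t : G) (x : M) : α (s * t⁻¹) x = α s ((α t).symm x) :=
  calc α (s * t⁻¹) x = α (s * t⁻¹) (α t ((α t).symm x)) := by
        rw [LinearEquiv.apply_symm_apply]
    _ = α s ((α t).symm x) := by rw [← hcoc, inv_mul_cancel_right]

variable [Fintype G] (α : G → M ≃ₗ[k] M)

def equivariantEmbedding (m : M) : G → M :=
  fun g => α g m

def equivariantRetraction (f : G → M) : M :=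
  (Fintype.card G : k)⁻¹ • ∑ t : G, (α t).symm (f t)

variable {α}

theorem equivariantRetraction_leftInverse (hchar : (Fintype.card G : k) ≠ 0) :
    Function.LeftInverse (equivariantRetraction α) (equivariantEmbedding α) := by
  intro m
  simp only [equivariantRetraction, equivariantEmbedding, LinearEquiv.symm_apply_apply,
    Finset.sum_const, Finset.card_univ, ← Nat.cast_smul_eq_nsmul k, inv_smul_smul₀ hchar]

variable [Group G] (α)

def equivariantAverage (f : G → M) : G → M :=
  fun s => (Fintype.card G : k)⁻¹ • ∑ t : G, α (s * t⁻¹) (f t)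

variable {α}

theorem equivariantAverage_eq_embedding_retraction
    (hcoc : ∀ (h g : G) (m : M), α (h * g) m = α h (α g m)) (f : G → M) :
    equivariantAverage α f = equivariantEmbedding α (equivariantRetraction α f) := by
  funext s
  simp only [equivariantAverage, equivariantEmbedding, equivariantRetraction, map_smul, map_sum,
    apply_mul_inv_of_cocycle hcoc]

theorem equivariantAverage_idem (hcoc : ∀ (h g : G) (m : M), α (h * g) m = α h (α g m))
    (hchar : (Fintype.card G : k) ≠ 0) (f : G → M) :
    equivariantAverage α (equivariantAverage α f) = equivariantAverage α f := by
  rw [equivariantAverage_eq_embedding_retraction hcoc (equivariantAverage α f),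
    equivariantAverage_eq_embedding_retraction hcoc f, equivariantRetraction_leftInverse hchar]

theorem range_equivariantAverage (hcoc : ∀ (h g : G) (m : M), α (h * g) m = α h (α g m))
    (hchar : (Fintype.card G : k) ≠ 0) :
    Set.range (equivariantAverage α) = Set.range (equivariantEmbedding α) := by
  have hfactor : equivariantAverage α = equivariantEmbedding α ∘ equivariantRetraction α :=
    funext (equivariantAverage_eq_embedding_retraction hcoc)
  rw [hfactor, (equivariantRetraction_leftInverse hchar).surjective.range_comp]

theorem equivariantAverage_add (f₁ f₂ : G → M) :
    equivariantAverage α (f₁ + f₂) = equivariantAverage α f₁ + equivariantAverage α f₂ := by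
  funext s
  simp only [equivariantAverage, Pi.add_apply, map_add, Finset.sum_add_distrib, smul_add]

theorem equivariantAverage_smul (c : k) (f : G → M) :
    equivariantAverage α (c • f) = c • equivariantAverage α f := by
  funext s
  simp only [equivariantAverage, Pi.smul_apply, map_smul, ← Finset.smul_sum]
  exact smul_comm _ _ _

theorem equivariantAverage_twisted_smul {R : Type*} [DistribSMul R M] [SMulCommClass k R M]
    (τ : G → R → R) (hτ : ∀ (g t : G) (r : R), τ (g * t) r = τ g (τ t r))
    (hα : ∀ (g : G) (r : R) (m : M), α g (r • m) = τ g r • α g m) (r : R) (f : G → M) :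
    equivariantAverage α (fun g => τ g r • f g) = fun g => τ g r • equivariantAverage α f g := by
  funext s
  simp only [equivariantAverage, hα, ← hτ, inv_mul_cancel_right, ← Finset.smul_sum]
  exact smul_comm _ _ _

end EquivariantAverage

theorem averaging_idempotent_and_equivariant_embedding
    (G : Type*) [Group G] [Fintype G]
    (hchar : (Fintype.card G : k) ≠ 0)
    (ρ : G →* (A ≃ₐ[k] A))
    (M : Type*) [AddCommGroup M] [Module k M]
    [Module A M] [Module Aᵐᵒᵖ M] [IsScalarTower k A M] [IsScalarTower k Aᵐᵒᵖ M]
    (α : G → (M ≃ₗ[k] M))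
    (hαl : ∀ (g : G) (a : A) (m : M), α g (a • m) = ρ g a • α g m)
    (hαr : ∀ (g : G) (b : A) (m : M),
      α g (MulOpposite.op b • m) = MulOpposite.op (ρ g b) • α g m)
    (hcoc : ∀ (h g : G) (m : M), α (h * g) m = α h (α g m)) :
    let E : (G → M) → (G → M) :=
      fun f s => (Fintype.card G : k)⁻¹ • ∑ t : G, α (s * t⁻¹) (f t)
    let abar : M → (G → M) := fun m g => α g m
    -- `E` is idempotent
    (∀ f, E (E f) = E f) ∧
    -- `E` is an `A`-`A`-bimodule endomorphism of `⊕_g M^g`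
    (∀ f₁ f₂, E (f₁ + f₂) = E f₁ + E f₂) ∧
    (∀ (c : k) (f), E (c • f) = c • E f) ∧
    (∀ (a : A) (f), E (fun g => ρ g a • f g) = fun g => ρ g a • E f g) ∧
    (∀ (b : A) (f), E (fun g => MulOpposite.op (ρ g b) • f g) =
      fun g => MulOpposite.op (ρ g b) • E f g) ∧
    -- `ᾱ` is an injective homomorphism of `A`-`A`-bimodules
    Function.Injective abar ∧
    (∀ m₁ m₂, abar (m₁ + m₂) = abar m₁ + abar m₂) ∧
    (∀ (c : k) (m), abar (c • m) = c • abar m) ∧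
    (∀ (a : A) (m), abar (a • m) = fun g => ρ g a • abar m g) ∧
    (∀ (b : A) (m), abar (MulOpposite.op b • m) = fun g => MulOpposite.op (ρ g b) • abar m g) ∧
    -- image of `ᾱ` is contained in the image of `E`, and `ᾱ` maps `M` onto `E(⊕_g M^g)`
    Set.range abar ⊆ Set.range E ∧
    Set.range abar = Set.range E := by
  intro E abar
  have hrange : Set.range abar = Set.range E := (range_equivariantAverage hcoc hchar).symm
  refine ⟨equivariantAverage_idem hcoc hchar, equivariantAverage_add, equivariantAverage_smul,
    equivariantAverage_twisted_smul (fun g a => ρ g a) (fun g t a => by simp) hαl,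
    fun b => equivariantAverage_twisted_smul (fun g b => MulOpposite.op (ρ g b.unop))
      (fun g t b => by simp) (fun g b => hαr g b.unop) (MulOpposite.op b),
    (equivariantRetraction_leftInverse hchar).injective,
    fun m₁ m₂ => funext fun g => map_add (α g) m₁ m₂,
    fun c m => funext fun g => map_smul (α g) c m,
    fun a m => funext fun g => hαl g a m,
    fun b m => funext fun g => hαr g b m,
    hrange.subset, hrange⟩

end
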